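/- Bound on type II errors between a CQ channel and a set of free CQ channels: For any parameters α > 1 and ε ∈ [0,1), any family 𝓕 of sets of free CQ channels satisfying Axioms CQ1, CQ2, and CQ4, and any CQ channel Φ : X → D(H), it holds that −log β_ε(Φ‖𝓕) ≤ D̃_α(Φ‖𝓕) + (α/(α−1)) log(1/(1−ε)). -/

import Mathlib

open scoped Kronecker
open Filter Matrix
open scoped ComplexOrder

attribute [local instance] Classical.propDecidable

noncomputable section

namespace CQ

variable {X d : Type*}

/-- Apply a real function to a matrix via its spectral decomposition (junk value `0` if the
matrix is not Hermitian).  For positive semidefinite matrices and `f 0 = 0` this realizes the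
"on-support" functional calculus. -/
def matFun [Fintype d] [DecidableEq d] (f : ℝ → ℝ) (A : Matrix d d ℂ) : Matrix d d ℂ :=
  if hA : A.IsHermitian then
    (hA.eigenvectorUnitary : Matrix d d ℂ) *
      Matrix.diagonal (fun i => (f (hA.eigenvalues i) : ℂ)) *
      star (hA.eigenvectorUnitary : Matrix d d ℂ)
  else 0

/-- Matrix logarithm taken on the support. -/
def matLog [Fintype d] [DecidableEq d] (A : Matrix d d ℂ) : Matrix d d ℂ := matFun Real.log A

/-- Real matrix power taken on the support. -/
def matRpow [Fintype d] [DecidableEq d] (A : Matrix d d ℂ) (r : ℝ) : Matrix d d ℂ :=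
  matFun (fun t => t ^ r) A

/-- Projection `{A ≥ 0}` onto the eigenspaces of nonnegative eigenvalues of a Hermitian matrix. -/
def posProj [Fintype d] [DecidableEq d] (A : Matrix d d ℂ) : Matrix d d ℂ :=
  matFun (fun t => if 0 ≤ t then 1 else 0) A

/-- `supp A ⊆ supp B`, expressed via ranges. -/
def suppLE [Fintype d] [DecidableEq d] (A B : Matrix d d ℂ) : Prop :=
  LinearMap.range (Matrix.toLin' A) ≤ LinearMap.range (Matrix.toLin' B)

/-- Quantum (Umegaki) relative entropy, with value `⊤` when the support condition fails. -/
def qRelEntropy [Fintype d] [DecidableEq d] (ρ σ : Matrix d d ℂ) : EReal :=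
  if suppLE ρ σ then (((ρ * (matLog ρ - matLog σ)).trace.re : ℝ) : EReal) else ⊤

/-- Sandwiched Rényi relative entropy of order `α`, with value `⊤` when the support condition
fails. -/
def sandRenyi [Fintype d] [DecidableEq d] (α : ℝ) (ρ σ : Matrix d d ℂ) : EReal :=
  if suppLE ρ σ then
    ((((α - 1)⁻¹ *
        Real.log ((matRpow (matRpow σ ((1 - α) / (2 * α)) * ρ *
          matRpow σ ((1 - α) / (2 * α))) α).trace.re)) : ℝ) : EReal)
  else ⊤

/-- A CQ channel: every output is a density operator. -/
def IsCQChannel [Fintype d] (Φ : X → Matrix d d ℂ) : Prop :=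
  ∀ x, (Φ x).PosSemidef ∧ (Φ x).trace = 1

/-- Channel divergence `D(Φ₁‖Φ₂) = max_x D(Φ₁(x)‖Φ₂(x))`. -/
def chDiv [Fintype X] [Fintype d] [DecidableEq d] (Φ₁ Φ₂ : X → Matrix d d ℂ) : EReal :=
  ⨆ x, qRelEntropy (Φ₁ x) (Φ₂ x)

/-- Sandwiched Rényi channel divergence. -/
def chRenyiDiv [Fintype X] [Fintype d] [DecidableEq d] (α : ℝ) (Φ₁ Φ₂ : X → Matrix d d ℂ) :
    EReal :=
  ⨆ x, sandRenyi α (Φ₁ x) (Φ₂ x)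

/-- `D(Φ‖𝓕) = min_{Φf ∈ 𝓕} D(Φ‖Φf)`. -/
def chDivSet [Fintype X] [Fintype d] [DecidableEq d] (Φ : X → Matrix d d ℂ)
    (S : Set (X → Matrix d d ℂ)) : EReal :=
  ⨅ Φf ∈ S, chDiv Φ Φf

/-- `D̃_α(Φ‖𝓕) = min_{Φf ∈ 𝓕} D̃_α(Φ‖Φf)`. -/
def chRenyiDivSet [Fintype X] [Fintype d] [DecidableEq d] (α : ℝ) (Φ : X → Matrix d d ℂ)
    (S : Set (X → Matrix d d ℂ)) : EReal :=
  ⨅ Φf ∈ S, chRenyiDiv α Φ Φf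

/-- Probability distribution on a finite alphabet. -/
def IsProbDist [Fintype X] (p : X → ℝ) : Prop := (∀ x, 0 ≤ p x) ∧ ∑ x, p x = 1

/-- POVM element: `0 ≤ T ≤ 1`. -/
def IsPOVMElem [Fintype d] [DecidableEq d] (T : Matrix d d ℂ) : Prop :=
  T.PosSemidef ∧ (1 - T).PosSemidef

/-- Type-I error of the test `(p, {T_x})` for the channel `Φ`. -/
def typeIErrVal [Fintype X] [Fintype d] [DecidableEq d] (Φ : X → Matrix d d ℂ) (p : X → ℝ)
    (T : X → Matrix d d ℂ) : ℝ :=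
  ∑ x, p x * ((1 - T x) * Φ x).trace.re

/-- Optimal type-II error `β_ε(Φ₁‖Φ₂)` between two CQ channels. -/
def typeIIErr [Fintype X] [Fintype d] [DecidableEq d] (ε : ℝ) (Φ₁ Φ₂ : X → Matrix d d ℂ) : ℝ :=
  sInf { v | ∃ p T, IsProbDist p ∧ (∀ x, IsPOVMElem (T x)) ∧ typeIErrVal Φ₁ p T ≤ ε ∧
    v = ∑ x, p x * (T x * Φ₂ x).trace.re }

/-- Optimal type-II error `β_ε(Φ‖𝓕)` against a set of CQ channels. -/
def typeIIErrSet [Fintype X] [Fintype d] [DecidableEq d] (ε : ℝ) (Φ : X → Matrix d d ℂ)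
    (S : Set (X → Matrix d d ℂ)) : ℝ :=
  sInf { v | ∃ p T, IsProbDist p ∧ (∀ x, IsPOVMElem (T x)) ∧ typeIErrVal Φ p T ≤ ε ∧
    v = sSup { w | ∃ Φf ∈ S, w = ∑ x, p x * (T x * Φf x).trace.re } }

/-- Tensor product of two CQ channels. -/
def prodChannel {X' d' : Type*} (Φ : X → Matrix d d ℂ) (Φ' : X' → Matrix d' d' ℂ) :
    X × X' → Matrix (d × d') (d × d') ℂ :=
  fun x => Φ x.1 ⊗ₖ Φ' x.2

/-- `n`-fold tensor power `Φ^{⊗n}` of a CQ channel, realized entrywise. -/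
def powChannel (Φ : X → Matrix d d ℂ) (n : ℕ) :
    (Fin n → X) → Matrix (Fin n → d) (Fin n → d) ℂ :=
  fun xs => Matrix.of fun i j => ∏ k, Φ (xs k) (i k) (j k)

def finEquiv (n m : ℕ) (γ : Type*) : ((Fin n → γ) × (Fin m → γ)) ≃ (Fin (n + m) → γ) :=
  (Equiv.sumArrowEquivProdArrow (Fin n) (Fin m) γ).symm.trans
    (Equiv.arrowCongr finSumFinEquiv (Equiv.refl γ))

/-- Tensor product of an `n`-fold and an `m`-fold CQ channel, as an `(n+m)`-fold CQ channel. -/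
def cqTensor {n m : ℕ} (Φ : (Fin n → X) → Matrix (Fin n → d) (Fin n → d) ℂ)
    (Ψ : (Fin m → X) → Matrix (Fin m → d) (Fin m → d) ℂ) :
    (Fin (n + m) → X) → Matrix (Fin (n + m) → d) (Fin (n + m) → d) ℂ :=
  fun xs =>
    Matrix.reindex (finEquiv n m d) (finEquiv n m d)
      (Φ ((finEquiv n m X).symm xs).1 ⊗ₖ Ψ ((finEquiv n m X).symm xs).2)

/-- All members of the family are CQ channels. -/
def FamilyCQ [Fintype d]
    (F : (n : ℕ) → Set ((Fin n → X) → Matrix (Fin n → d) (Fin n → d) ℂ)) : Prop :=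
  ∀ n, ∀ Φ ∈ F n, IsCQChannel Φ

/-- Axiom CQ1: each set contains a CQ channel whose outputs are all full-rank,
equivalently bounded below by `Λ·I` for some `Λ ∈ (0,1]`. -/
def AxCQ1 [Fintype d] [DecidableEq d]
    (F : (n : ℕ) → Set ((Fin n → X) → Matrix (Fin n → d) (Fin n → d) ℂ)) : Prop :=
  ∀ n, ∃ Φfull ∈ F n, ∃ Λ : ℝ, 0 < Λ ∧ Λ ≤ 1 ∧
    ∀ xs, (Φfull xs - Λ • (1 : Matrix (Fin n → d) (Fin n → d) ℂ)).PosSemidef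

/-- Axiom CQ2: each set is compact. -/
def AxCQ2 (F : (n : ℕ) → Set ((Fin n → X) → Matrix (Fin n → d) (Fin n → d) ℂ)) : Prop :=
  ∀ n, IsCompact (F n)

/-- Axiom CQ3: the family is closed under tensor products. -/
def AxCQ3 (F : (n : ℕ) → Set ((Fin n → X) → Matrix (Fin n → d) (Fin n → d) ℂ)) : Prop :=
  ∀ n m, ∀ Φ ∈ F n, ∀ Ψ ∈ F m, cqTensor Φ Ψ ∈ F (n + m)

/-- Axiom CQ4: each set is convex. -/
def AxCQ4 (F : (n : ℕ) → Set ((Fin n → X) → Matrix (Fin n → d) (Fin n → d) ℂ)) : Prop :=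
  ∀ n, Convex ℝ (F n)

/-- Single-set version of Axiom CQ1. -/
def SetCQ1 [Fintype d] [DecidableEq d] (S : Set (X → Matrix d d ℂ)) : Prop :=
  ∃ Φfull ∈ S, ∃ Λ : ℝ, 0 < Λ ∧ Λ ≤ 1 ∧ ∀ x, (Φfull x - Λ • (1 : Matrix d d ℂ)).PosSemidef

/-- Trace distance `(1/2)‖A−B‖₁` (for Hermitian differences; junk `0` otherwise). -/
def traceDist [Fintype d] [DecidableEq d] (A B : Matrix d d ℂ) : ℝ :=
  if h : (A - B).IsHermitian then (1 / 2) * ∑ i, |h.eigenvalues i| else 0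

/-- Diamond distance between CQ channels. -/
def diamondDist [Fintype X] [Fintype d] [DecidableEq d] (Φ₁ Φ₂ : X → Matrix d d ℂ) : ℝ :=
  ⨆ x, traceDist (Φ₁ x) (Φ₂ x)

/-- Generalized robustness of a CQ channel with respect to a set of free CQ channels. -/
def genRobustness [Fintype X] [Fintype d] (S : Set (X → Matrix d d ℂ))
    (Φ : X → Matrix d d ℂ) : ℝ :=
  sInf { s | 0 ≤ s ∧ ∃ Φ' : X → Matrix d d ℂ, IsCQChannel Φ' ∧
    (fun x => (1 + s)⁻¹ • (Φ x + s • Φ' x)) ∈ S }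

/-- `N ⊗ id_k` acting blockwise. -/
def tensorIdMap {din dout : Type*}
    (N : Matrix din din ℂ →ₗ[ℂ] Matrix dout dout ℂ) (k : Type*)
    (M : Matrix (din × k) (din × k) ℂ) : Matrix (dout × k) (dout × k) ℂ :=
  Matrix.of fun a b => N (Matrix.of fun i j => M (i, a.2) (j, b.2)) a.1 b.1

/-- Completely positive and trace preserving linear map on matrices. -/
def IsCPTP {din dout : Type*} [Fintype din] [Fintype dout]
    (N : Matrix din din ℂ →ₗ[ℂ] Matrix dout dout ℂ) : Prop :=
  (∀ (k : Type) [Fintype k], ∀ M : Matrix (din × k) (din × k) ℂ,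
      M.PosSemidef → (tensorIdMap N k M).PosSemidef) ∧
  ∀ M : Matrix din din ℂ, (N M).trace = M.trace

/-- Action `(Θ ⊗ id)[Φ]` of a superchannel (given by `p_Θ` and CPTP maps `N`) on a CQ channel
with auxiliary classical input and quantum output. -/
def superAct {Xin Xout Xaux din dout daux : Type*} [Fintype Xin]
    (p : Xout → Xin → ℝ)
    (N : Xin → Xout → Matrix din din ℂ →ₗ[ℂ] Matrix dout dout ℂ)
    (Φ : Xin × Xaux → Matrix (din × daux) (din × daux) ℂ) :
    Xout × Xaux → Matrix (dout × daux) (dout × daux) ℂ :=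
  fun x => ∑ xi : Xin, p x.1 xi • tensorIdMap (N xi x.1) daux (Φ (xi, x.2))

/-- The index `b·M + m` of the `m`-th member of the `b`-th complete block of size `M`. -/
def grpIdx {n M : ℕ} (b : Fin (n / M)) (m : Fin M) : Fin n :=
  ⟨(b : ℕ) * M + m, by
    have h1 : ((b : ℕ) + 1) * M ≤ n / M * M :=
      Nat.mul_le_mul_right M b.2
    have h3 : n / M * M ≤ n := Nat.div_mul_le_self n M
    have h4 : (m : ℕ) < M := m.2
    have h5 : (b : ℕ) * M + M ≤ n := by rw [add_mul, one_mul] at h1; omega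
    omega⟩

/-- The index `(n/M)·M + k` of the `k`-th leftover position. -/
def remIdx {n M : ℕ} (k : Fin (n % M)) : Fin n :=
  ⟨n / M * M + k, by
    have h1 : n / M * M + n % M = n := by rw [mul_comm]; exact Nat.div_add_mod n M
    have h2 : (k : ℕ) < n % M := k.2
    omega⟩

/-- The channel `(Φ₂^{(M)})^{⊗ (n/M)} ⊗ Φfull^{⊗ (n % M)}`, realized entrywise on `n` tensor
factors grouped into blocks of size `M` followed by the leftover factors. -/
def mixedPow {M : ℕ} (Φ₂M : (Fin M → X) → Matrix (Fin M → d) (Fin M → d) ℂ)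
    (Φfull : X → Matrix d d ℂ) (n : ℕ) :
    (Fin n → X) → Matrix (Fin n → d) (Fin n → d) ℂ :=
  fun xs => Matrix.of fun i j =>
    (∏ b : Fin (n / M), Φ₂M (fun m => xs (grpIdx b m)) (fun m => i (grpIdx b m))
        (fun m => j (grpIdx b m))) *
    (∏ k : Fin (n % M), Φfull (xs (remIdx k)) (i (remIdx k)) (j (remIdx k)))


/-!
Fix a free channel `Φf` and a test `(p, {T_x})` with type-I error at most `ε`, and put
`α' = α / (α - 1)`. For every input `x` the single-state inequality
`Tr[T ρ] ≤ Q̃_α(ρ‖σ)^{1/α} Tr[T σ]^{1/α'}` (with `ρ = Φ x`, `σ = Φf x`) gives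
`Tr[T σ] ≥ e^{-D̃_α(Φ‖Φf)} Tr[T ρ]^{α'}`; averaging over `p` and using convexity of `t ↦ t^{α'}`
bounds the type-II error against `Φf` below by `e^{-D̃_α(Φ‖Φf)} (1 - ε)^{α'}`, and taking the
infimum over `Φf` gives the theorem.

The single-state inequality is Hölder's inequality for the factorization
`Tr[T ρ] = Tr[(σ^{-s} ρ σ^{-s}) (σ^s T σ^s)]`, `s = 1 / (2α')`, valid because `σ^s σ^{-s}` is the
support projection of `σ`. The second factor satisfies `Tr[(σ^s T σ^s)^{α'}] ≤ Tr[T σ]`: exchange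
`M*M` and `MM*` for `M = T^{1/2} σ^s` (they have the same spectrum) and apply Jensen's trace
inequality to the contraction `T^{1/2}`. Hölder and Jensen both reduce to their scalar versions
through the substochastic weights `|⟨u_i, v_j⟩|²` between two eigenbases.
-/

section FunctionalCalculus

variable [Fintype d] [DecidableEq d] {A : Matrix d d ℂ}

lemma matFun_eq_cfc (f : ℝ → ℝ) (hA : A.IsHermitian) : matFun f A = cfc f A := by
  rw [hA.cfc_eq, Matrix.IsHermitian.cfc, Unitary.conjStarAlgAut_apply, matFun, dif_pos hA]
  rfl

lemma matRpow_eq_cfc (hA : A.IsHermitian) (r : ℝ) : matRpow A r = cfc (fun t : ℝ => t ^ r) A :=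
  matFun_eq_cfc _ hA

lemma continuousOn_spectrum (f : ℝ → ℝ) : ContinuousOn f (spectrum ℝ A) :=
  A.finite_real_spectrum.continuousOn f

lemma nonneg_of_mem_spectrum (hA : A.PosSemidef) {t : ℝ} (ht : t ∈ spectrum ℝ A) : 0 ≤ t := by
  obtain ⟨i, rfl⟩ := hA.1.spectrum_real_eq_range_eigenvalues ▸ ht
  exact hA.eigenvalues_nonneg i

lemma trace_matFun (f : ℝ → ℝ) (hA : A.IsHermitian) :
    (matFun f A).trace = ∑ i, (f (hA.eigenvalues i) : ℂ) := by
  rw [matFun, dif_pos hA, Matrix.trace_mul_cycle, Unitary.coe_star_mul_self, Matrix.one_mul,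
    Matrix.trace_diagonal]

lemma trace_matFun_re (f : ℝ → ℝ) (hA : A.IsHermitian) :
    (matFun f A).trace.re = ∑ i, f (hA.eigenvalues i) := by
  simp [trace_matFun f hA]

lemma matFun_posSemidef {f : ℝ → ℝ} (hA : A.IsHermitian) (hf : ∀ t ∈ spectrum ℝ A, 0 ≤ f t) :
    (matFun f A).PosSemidef := by
  open MatrixOrder in
  rw [matFun_eq_cfc f hA, ← Matrix.nonneg_iff_posSemidef]
  exact cfc_nonneg hf

lemma matRpow_posSemidef (hA : A.PosSemidef) (r : ℝ) : (matRpow A r).PosSemidef :=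
  matFun_posSemidef hA.1 fun _ ht => Real.rpow_nonneg (nonneg_of_mem_spectrum hA ht) r

lemma matRpow_mul_matRpow (hA : A.PosSemidef) {r s : ℝ} (hrs : r + s ≠ 0) :
    matRpow A r * matRpow A s = matRpow A (r + s) := by
  rw [matRpow_eq_cfc hA.1, matRpow_eq_cfc hA.1, matRpow_eq_cfc hA.1,
    ← cfc_mul _ _ A (continuousOn_spectrum _) (continuousOn_spectrum _)]
  exact cfc_congr fun t ht => (Real.rpow_add' (nonneg_of_mem_spectrum hA ht) hrs).symm

lemma matRpow_matRpow (hA : A.PosSemidef) (r s : ℝ) :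
    matRpow (matRpow A r) s = matRpow A (r * s) := by
  rw [matRpow_eq_cfc (matRpow_posSemidef hA r).1, matRpow_eq_cfc hA.1, matRpow_eq_cfc hA.1,
    ← cfc_comp _ _ A hA.1.isSelfAdjoint ((A.finite_real_spectrum.image _).continuousOn _)
      (continuousOn_spectrum _)]
  exact cfc_congr fun t ht => (Real.rpow_mul (nonneg_of_mem_spectrum hA ht) r s).symm

lemma matRpow_one (hA : A.PosSemidef) : matRpow A 1 = A := by
  rw [matRpow_eq_cfc hA.1]
  exact (cfc_congr fun t _ => Real.rpow_one t).trans (cfc_id' ℝ A hA.1.isSelfAdjoint)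

lemma matRpow_inv_two_mul_self (hA : A.PosSemidef) : matRpow A 2⁻¹ * matRpow A 2⁻¹ = A := by
  rw [matRpow_mul_matRpow hA (by norm_num)]
  norm_num [matRpow_one hA]

end FunctionalCalculus

section Trace

variable [Fintype d] {A B : Matrix d d ℂ}

lemma trace_re_nonneg (hA : A.PosSemidef) : 0 ≤ A.trace.re :=
  (Complex.nonneg_iff.mp hA.trace_nonneg).1

lemma trace_mul_re_nonneg (hA : A.PosSemidef) (hB : B.PosSemidef) : 0 ≤ (A * B).trace.re := by
  obtain ⟨C, rfl⟩ : ∃ C : Matrix d d ℂ, B = Cᴴ * C := by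
    open MatrixOrder in exact CStarAlgebra.nonneg_iff_eq_star_mul_self.mp hB.nonneg
  rw [← Matrix.mul_assoc, Matrix.trace_mul_cycle]
  exact trace_re_nonneg (hA.mul_mul_conjTranspose_same C)

variable [DecidableEq d]

lemma trace_mul_re_le_one {T ρ : Matrix d d ℂ} (hT1 : (1 - T).PosSemidef) (hρ : ρ.PosSemidef)
    (hρ1 : ρ.trace = 1) : (T * ρ).trace.re ≤ 1 := by
  have h := trace_mul_re_nonneg hT1 hρ
  rw [Matrix.sub_mul, Matrix.one_mul, Matrix.trace_sub, hρ1, Complex.sub_re, Complex.one_re] at h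
  linarith

lemma conjTranspose_mul_diagonal_mul_apply_self (Y : Matrix d d ℂ) (a : d → ℝ) (j : d) :
    (Yᴴ * Matrix.diagonal (fun i => (a i : ℂ)) * Y) j j =
      ((∑ i, a i * Complex.normSq (Y i j) : ℝ) : ℂ) := by
  rw [Matrix.mul_apply]
  push_cast
  refine Finset.sum_congr rfl fun i _ => ?_
  rw [Matrix.mul_diagonal, Matrix.conjTranspose_apply, ← Complex.mul_conj, Complex.star_def]
  ring

end Trace

section Holder

lemma sum_sum_mul_rpow_inv_rpow_le {ι κ : Type*} [Fintype ι] [Fintype κ] {a : ι → ℝ}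
    {c : ι → κ → ℝ} (ha : ∀ i, 0 ≤ a i) (hc : ∀ i j, 0 ≤ c i j) (hrow : ∀ i, ∑ j, c i j ≤ 1)
    {p : ℝ} (hp : p ≠ 0) : ∑ i, ∑ j, (a i * c i j ^ p⁻¹) ^ p ≤ ∑ i, a i ^ p := by
  refine Finset.sum_le_sum fun i _ => ?_
  have h : ∀ j, (a i * c i j ^ p⁻¹) ^ p = a i ^ p * c i j := fun j => by
    rw [Real.mul_rpow (ha i) (Real.rpow_nonneg (hc i j) _), ← Real.rpow_mul (hc i j),
      inv_mul_cancel₀ hp, Real.rpow_one]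
  simp_rw [h, ← Finset.mul_sum]
  exact mul_le_of_le_one_right (Real.rpow_nonneg (ha i) p) (hrow i)

lemma sum_mul_mul_le_of_sum_le_one {ι κ : Type*} [Fintype ι] [Fintype κ] {a : ι → ℝ} {b : κ → ℝ}
    {c : ι → κ → ℝ} (ha : ∀ i, 0 ≤ a i) (hb : ∀ j, 0 ≤ b j) (hc : ∀ i j, 0 ≤ c i j)
    (hrow : ∀ i, ∑ j, c i j ≤ 1) (hcol : ∀ j, ∑ i, c i j ≤ 1) {p q : ℝ}
    (hpq : p.HolderConjugate q) :
    ∑ i, ∑ j, a i * b j * c i j ≤ (∑ i, a i ^ p) ^ p⁻¹ * (∑ j, b j ^ q) ^ q⁻¹ := by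
  set F : ι × κ → ℝ := fun x => a x.1 * c x.1 x.2 ^ p⁻¹
  set G : ι × κ → ℝ := fun x => b x.2 * c x.1 x.2 ^ q⁻¹
  have hF : ∀ x, 0 ≤ F x := fun x => mul_nonneg (ha _) (Real.rpow_nonneg (hc _ _) _)
  have hG : ∀ x, 0 ≤ G x := fun x => mul_nonneg (hb _) (Real.rpow_nonneg (hc _ _) _)
  have hFG : ∑ x, F x * G x = ∑ i, ∑ j, a i * b j * c i j := by
    rw [Fintype.sum_prod_type]
    refine Finset.sum_congr rfl fun i _ => Finset.sum_congr rfl fun j _ => ?_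
    calc F (i, j) * G (i, j) = a i * b j * (c i j ^ p⁻¹ * c i j ^ q⁻¹) := by ring
      _ = a i * b j * c i j := by
        rw [← Real.rpow_add' (hc i j) (by simp [hpq.inv_add_inv_eq_one]),
          hpq.inv_add_inv_eq_one, Real.rpow_one]
  have hFp : ∑ x, F x ^ p ≤ ∑ i, a i ^ p := by
    rw [Fintype.sum_prod_type]
    exact sum_sum_mul_rpow_inv_rpow_le ha hc hrow hpq.ne_zero
  have hGq : ∑ x, G x ^ q ≤ ∑ j, b j ^ q := by
    rw [Fintype.sum_prod_type, Finset.sum_comm]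
    exact sum_sum_mul_rpow_inv_rpow_le hb (fun j i => hc i j) hcol hpq.symm.ne_zero
  have hF0 : 0 ≤ ∑ x, F x ^ p := Finset.sum_nonneg fun x _ => Real.rpow_nonneg (hF x) p
  have hG0 : 0 ≤ ∑ x, G x ^ q := Finset.sum_nonneg fun x _ => Real.rpow_nonneg (hG x) q
  calc ∑ i, ∑ j, a i * b j * c i j = ∑ x, F x * G x := hFG.symm
    _ ≤ (∑ x, F x ^ p) ^ (1 / p) * (∑ x, G x ^ q) ^ (1 / q) :=
      Real.inner_le_Lp_mul_Lq_of_nonneg _ hpq (fun x _ => hF x) (fun x _ => hG x)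
    _ ≤ (∑ i, a i ^ p) ^ p⁻¹ * (∑ j, b j ^ q) ^ q⁻¹ := by
      rw [one_div, one_div]
      exact mul_le_mul (Real.rpow_le_rpow hF0 hFp (inv_nonneg.2 hpq.nonneg))
        (Real.rpow_le_rpow hG0 hGq (inv_nonneg.2 hpq.symm.nonneg)) (Real.rpow_nonneg hG0 _)
        (Real.rpow_nonneg (hF0.trans hFp) _)

variable [Fintype d] [DecidableEq d]

lemma sum_normSq_apply_left {W : Matrix d d ℂ} (hW : W ∈ Matrix.unitaryGroup d ℂ) (j : d) :
    ∑ i, Complex.normSq (W i j) = 1 := by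
  have h := conjTranspose_mul_diagonal_mul_apply_self W (fun _ => 1) j
  simp only [Complex.ofReal_one, Matrix.diagonal_one, Matrix.mul_one, one_mul] at h
  rw [← Matrix.star_eq_conjTranspose, Matrix.mem_unitaryGroup_iff'.mp hW, Matrix.one_apply_eq] at h
  exact_mod_cast h.symm

lemma sum_normSq_apply_right {W : Matrix d d ℂ} (hW : W ∈ Matrix.unitaryGroup d ℂ) (i : d) :
    ∑ j, Complex.normSq (W i j) = 1 := by
  have h := sum_normSq_apply_left (Unitary.star_mem hW) i
  simpa [Matrix.star_apply] using h

lemma trace_mul_re_eq_sum {A B : Matrix d d ℂ} (hA : A.IsHermitian) (hB : B.IsHermitian) :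
    (A * B).trace.re = ∑ i, ∑ j, hA.eigenvalues i * hB.eigenvalues j * Complex.normSq
      ((star (hA.eigenvectorUnitary : Matrix d d ℂ) * hB.eigenvectorUnitary) i j) := by
  set U : Matrix d d ℂ := (hA.eigenvectorUnitary : Matrix d d ℂ)
  set V : Matrix d d ℂ := (hB.eigenvectorUnitary : Matrix d d ℂ)
  set W := star U * V
  have hAB : (A * B).trace = (Wᴴ * Matrix.diagonal (fun i => (hA.eigenvalues i : ℂ)) * W *
      Matrix.diagonal (fun j => (hB.eigenvalues j : ℂ))).trace := by
    conv_lhs => rw [hA.spectral_theorem, hB.spectral_theorem]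
    simp only [Unitary.conjStarAlgAut_apply, W, ← Matrix.star_eq_conjTranspose, star_mul, star_star]
    simp only [Matrix.mul_assoc]
    rw [Matrix.trace_mul_comm (star V)]
    simp only [Matrix.mul_assoc]
    rfl
  have hdiag : ∀ j, (Wᴴ * Matrix.diagonal (fun i => (hA.eigenvalues i : ℂ)) * W *
      Matrix.diagonal (fun j => (hB.eigenvalues j : ℂ))) j j
        = ((∑ i, hA.eigenvalues i * Complex.normSq (W i j) * hB.eigenvalues j : ℝ) : ℂ) := by
    intro j
    rw [Matrix.mul_diagonal, conjTranspose_mul_diagonal_mul_apply_self, ← Complex.ofReal_mul,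
      Finset.sum_mul]
  rw [hAB, Matrix.trace, Complex.re_sum, Finset.sum_comm]
  refine Finset.sum_congr rfl fun j _ => ?_
  rw [Matrix.diag_apply, hdiag, Complex.ofReal_re]
  exact Finset.sum_congr rfl fun i _ => by ring

lemma trace_mul_re_le_holder {A B : Matrix d d ℂ} (hA : A.PosSemidef) (hB : B.PosSemidef)
    {p q : ℝ} (hpq : p.HolderConjugate q) :
    (A * B).trace.re ≤ (matRpow A p).trace.re ^ p⁻¹ * (matRpow B q).trace.re ^ q⁻¹ := by
  have hW := mul_mem (Unitary.star_mem hA.1.eigenvectorUnitary.2) hB.1.eigenvectorUnitary.2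
  rw [trace_mul_re_eq_sum hA.1 hB.1, matRpow, matRpow, trace_matFun_re _ hA.1,
    trace_matFun_re _ hB.1]
  exact sum_mul_mul_le_of_sum_le_one hA.eigenvalues_nonneg hB.eigenvalues_nonneg
    (fun _ _ => Complex.normSq_nonneg _) (fun i => (sum_normSq_apply_right hW i).le)
    (fun j => (sum_normSq_apply_left hW j).le) hpq

end Holder

section Jensen

lemma rpow_sum_mul_le_sum_mul_rpow {ι : Type*} [Fintype ι] {w f : ι → ℝ} (hw : ∀ i, 0 ≤ w i)
    (hw1 : ∑ i, w i ≤ 1) (hf : ∀ i, 0 ≤ f i) {p : ℝ} (hp : 1 ≤ p) :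
    (∑ i, w i * f i) ^ p ≤ ∑ i, w i * f i ^ p := by
  have hS : 0 ≤ ∑ i, w i * f i ^ p :=
    Finset.sum_nonneg fun i _ => mul_nonneg (hw i) (Real.rpow_nonneg (hf i) p)
  have hH := Real.inner_le_weight_mul_Lp_of_nonneg Finset.univ hp w f hw hf
  have hW : (∑ i, w i) ^ (1 - p⁻¹) ≤ 1 :=
    Real.rpow_le_one (Finset.sum_nonneg fun i _ => hw i) hw1
      (sub_nonneg.2 (inv_le_one_of_one_le₀ hp))
  calc (∑ i, w i * f i) ^ p ≤ ((∑ i, w i * f i ^ p) ^ p⁻¹) ^ p := by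
        refine Real.rpow_le_rpow (Finset.sum_nonneg fun i _ => mul_nonneg (hw i) (hf i)) ?_
          (by linarith)
        exact hH.trans (mul_le_of_le_one_left (Real.rpow_nonneg hS _) hW)
    _ = ∑ i, w i * f i ^ p := by
        rw [← Real.rpow_mul hS, inv_mul_cancel₀ (by linarith), Real.rpow_one]

variable [Fintype d] [DecidableEq d] {A : Matrix d d ℂ}

lemma matFun_id (hA : A.IsHermitian) : matFun id A = A := by
  rw [matFun_eq_cfc _ hA]
  exact cfc_id ℝ A hA.isSelfAdjoint

lemma matFun_one (hA : A.IsHermitian) : matFun (fun _ => 1) A = 1 := by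
  rw [matFun_eq_cfc _ hA]
  exact cfc_const_one ℝ A

lemma re_conj_matFun_apply_self (f : ℝ → ℝ) (hA : A.IsHermitian) (Z V : Matrix d d ℂ) (j : d) :
    ((Vᴴ * (Zᴴ * matFun f A * Z) * V) j j).re = ∑ i, f (hA.eigenvalues i) *
      Complex.normSq ((star (hA.eigenvectorUnitary : Matrix d d ℂ) * Z * V) i j) := by
  have h : Vᴴ * (Zᴴ * matFun f A * Z) * V =
      (star (hA.eigenvectorUnitary : Matrix d d ℂ) * Z * V)ᴴ *
        Matrix.diagonal (fun i => (f (hA.eigenvalues i) : ℂ)) *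
        (star (hA.eigenvectorUnitary : Matrix d d ℂ) * Z * V) := by
    simp only [matFun, dif_pos hA, ← Matrix.star_eq_conjTranspose, star_mul, star_star,
      Matrix.mul_assoc]
  rw [h, conjTranspose_mul_diagonal_mul_apply_self, Complex.ofReal_re]

lemma trace_rpow_conj_le {Z : Matrix d d ℂ} (hA : A.PosSemidef) (hZ : (1 - Zᴴ * Z).PosSemidef)
    {q : ℝ} (hq : 1 ≤ q) :
    (matRpow (Zᴴ * A * Z) q).trace.re ≤ (Zᴴ * matRpow A q * Z).trace.re := by
  have hC := hA.conjTranspose_mul_mul_same Z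
  set V : Matrix d d ℂ := (hC.1.eigenvectorUnitary : Matrix d d ℂ)
  set c : d → d → ℝ := fun i j =>
    Complex.normSq ((star (hA.1.eigenvectorUnitary : Matrix d d ℂ) * Z * V) i j)
  have hV : Vᴴ * V = 1 := Unitary.coe_star_mul_self _
  -- The eigenvalues of `Zᴴ A Z` are `c`-averages of those of `A`, with column sums of `c` at most
  -- one because `Z` is a contraction; scalar Jensen then applies to each of them.
  have hμ : ∀ j, hC.1.eigenvalues j = ∑ i, c i j * hA.1.eigenvalues i := by
    intro j
    have h := re_conj_matFun_apply_self id hA.1 Z V j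
    rw [matFun_id hA.1, ← Matrix.star_eq_conjTranspose] at h
    have hD := hC.1.conjStarAlgAut_star_eigenvectorUnitary
    rw [Unitary.conjStarAlgAut_star_apply] at hD
    rw [hD] at h
    simpa [mul_comm] using h
  have hcol : ∀ j, ∑ i, c i j ≤ 1 := by
    intro j
    have h := re_conj_matFun_apply_self (fun _ => 1) hA.1 Z V j
    have hdiag := (hZ.conjTranspose_mul_mul_same V).diag_nonneg (i := j)
    rw [matFun_one hA.1, Matrix.mul_one] at h
    rw [Matrix.mul_sub, Matrix.sub_mul, Matrix.mul_one, hV] at hdiag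
    simp only [one_mul] at h
    have h1 := (Complex.nonneg_iff.mp hdiag).1
    rw [Matrix.sub_apply, Matrix.one_apply_eq, Complex.sub_re, Complex.one_re] at h1
    linarith
  have hrhs : (Zᴴ * matRpow A q * Z).trace.re = ∑ j, ∑ i, c i j * hA.1.eigenvalues i ^ q := by
    have hV' : V * Vᴴ = 1 := Unitary.coe_mul_star_self _
    rw [← Matrix.one_mul (Zᴴ * matRpow A q * Z), ← hV', Matrix.mul_assoc,
      ← Matrix.trace_mul_cycle', Matrix.trace, Complex.re_sum]
    refine Finset.sum_congr rfl fun j _ => ?_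
    rw [Matrix.diag_apply, ← Matrix.mul_assoc, matRpow, re_conj_matFun_apply_self _ hA.1]
    exact Finset.sum_congr rfl fun i _ => mul_comm _ _
  rw [matRpow, trace_matFun_re _ hC.1, hrhs]
  refine Finset.sum_le_sum fun j _ => ?_
  rw [hμ j]
  exact rpow_sum_mul_le_sum_mul_rpow (fun i => Complex.normSq_nonneg _) (hcol j)
    hA.eigenvalues_nonneg hq

end Jensen

section Swap

variable [Fintype d] [DecidableEq d] {A B : Matrix d d ℂ}

lemma trace_matFun_eq_sum_roots (f : ℝ → ℝ) (hA : A.IsHermitian) :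
    (matFun f A).trace = (A.charpoly.roots.map fun z => (f z.re : ℂ)).sum := by
  rw [trace_matFun f hA, hA.roots_charpoly_eq_eigenvalues, Multiset.map_map]
  simp

lemma trace_matFun_eq_of_charpoly_eq (f : ℝ → ℝ) (hA : A.IsHermitian) (hB : B.IsHermitian)
    (h : A.charpoly = B.charpoly) : (matFun f A).trace = (matFun f B).trace := by
  rw [trace_matFun_eq_sum_roots f hA, trace_matFun_eq_sum_roots f hB, h]

lemma trace_matFun_conjTranspose_mul_self (f : ℝ → ℝ) (M : Matrix d d ℂ) :
    (matFun f (Mᴴ * M)).trace = (matFun f (M * Mᴴ)).trace :=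
  trace_matFun_eq_of_charpoly_eq f (Matrix.isHermitian_conjTranspose_mul_self M)
    (Matrix.isHermitian_mul_conjTranspose_self M) (Matrix.charpoly_mul_comm _ _)

lemma trace_rpow_conj_le_trace_mul {σ T : Matrix d d ℂ} (hσ : σ.PosSemidef) (hT : T.PosSemidef)
    (hT1 : (1 - T).PosSemidef) {q : ℝ} (hq : 1 ≤ q) :
    (matRpow (matRpow σ (2 * q)⁻¹ * T * matRpow σ (2 * q)⁻¹) q).trace.re ≤ (T * σ).trace.re := by
  set G := matRpow σ (2 * q)⁻¹
  set R := matRpow T 2⁻¹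
  have hG : Gᴴ = G := (matRpow_posSemidef hσ _).1
  have hR : Rᴴ = R := (matRpow_posSemidef hT _).1
  have hRR : R * R = T := matRpow_inv_two_mul_self hT
  have hGG : G * G = matRpow σ q⁻¹ := by
    rw [matRpow_mul_matRpow hσ (by positivity)]
    congr 1
    field_simp
    ring
  have hσq : matRpow (matRpow σ q⁻¹) q = σ := by
    rw [matRpow_matRpow hσ, inv_mul_cancel₀ (by positivity), matRpow_one hσ]
  have hswap := trace_matFun_conjTranspose_mul_self (· ^ q) (R * G)
  simp only [Matrix.conjTranspose_mul, hG, hR] at hswap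
  have hjensen := trace_rpow_conj_le (matRpow_posSemidef hσ q⁻¹) (Z := R) (by rwa [hR, hRR]) hq
  calc (matRpow (G * T * G) q).trace.re = (matRpow (R * matRpow σ q⁻¹ * R) q).trace.re := by
        have h1 : G * T * G = G * R * (R * G) := by rw [← hRR]; simp only [Matrix.mul_assoc]
        have h2 : R * matRpow σ q⁻¹ * R = R * G * (G * R) := by
          rw [← hGG]; simp only [Matrix.mul_assoc]
        rw [h1, h2, matRpow, matRpow, hswap]
    _ ≤ (R * σ * R).trace.re := by rw [hR, hσq] at hjensen; exact hjensen
    _ = (T * σ).trace.re := by rw [Matrix.trace_mul_cycle, hRR]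

end Swap

section Sandwiched

variable [Fintype d] [DecidableEq d]

/-- `Q̃_α(ρ‖σ)`, the trace inside the logarithm of `D̃_α(ρ‖σ)`. -/
def sandwichedQ (α : ℝ) (ρ σ : Matrix d d ℂ) : ℝ :=
  (matRpow (matRpow σ ((1 - α) / (2 * α)) * ρ * matRpow σ ((1 - α) / (2 * α))) α).trace.re

lemma sandRenyi_of_suppLE {α : ℝ} {ρ σ : Matrix d d ℂ} (h : suppLE ρ σ) :
    sandRenyi α ρ σ = (((α - 1)⁻¹ * Real.log (sandwichedQ α ρ σ) : ℝ) : EReal) :=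
  if_pos h

lemma sandwichedQ_nonneg {α : ℝ} {ρ σ : Matrix d d ℂ} (hρ : ρ.PosSemidef) (hσ : σ.PosSemidef) :
    0 ≤ sandwichedQ α ρ σ := by
  refine trace_re_nonneg (matRpow_posSemidef ?_ α)
  have h := hρ.mul_mul_conjTranspose_same (matRpow σ ((1 - α) / (2 * α)))
  rwa [(matRpow_posSemidef hσ _).1] at h

lemma mul_eq_self_of_suppLE {P ρ σ : Matrix d d ℂ} (hP : P * σ = σ) (h : suppLE ρ σ) :
    P * ρ = ρ := by
  refine Matrix.toLin'.injective (LinearMap.ext fun v => ?_)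
  obtain ⟨w, hw⟩ := h (LinearMap.mem_range_self (Matrix.toLin' ρ) v)
  rw [Matrix.toLin'_apply, Matrix.toLin'_apply] at *
  rw [← Matrix.mulVec_mulVec, ← hw, Matrix.mulVec_mulVec, hP]

lemma matRpow_mul_matRpow_neg_mul_self {σ : Matrix d d ℂ} (hσ : σ.PosSemidef) (s : ℝ) :
    matRpow σ s * matRpow σ (-s) * σ = σ := by
  conv_rhs => rw [← cfc_id' ℝ σ hσ.1.isSelfAdjoint]
  rw [matRpow_eq_cfc hσ.1, matRpow_eq_cfc hσ.1,
    ← cfc_mul _ _ σ (continuousOn_spectrum _) (continuousOn_spectrum _)]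
  conv_lhs => enter [2]; rw [← cfc_id' ℝ σ hσ.1.isSelfAdjoint]
  rw [← cfc_mul _ _ σ (continuousOn_spectrum _) (continuousOn_spectrum _)]
  refine cfc_congr fun t ht => ?_
  rcases (nonneg_of_mem_spectrum hσ ht).eq_or_lt with rfl | ht0
  · simp
  · rw [Real.rpow_neg ht0.le, mul_inv_cancel₀ (Real.rpow_pos_of_pos ht0 s).ne', one_mul]

end Sandwiched

section Key

variable [Fintype d] [DecidableEq d]

lemma trace_mul_re_le_sandwichedQ {ρ σ T : Matrix d d ℂ} (hρ : ρ.PosSemidef) (hσ : σ.PosSemidef)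
    (hT : T.PosSemidef) (hT1 : (1 - T).PosSemidef) (hsupp : suppLE ρ σ) {p q : ℝ}
    (hpq : p.HolderConjugate q) :
    (T * ρ).trace.re ≤ sandwichedQ p ρ σ ^ p⁻¹ * (T * σ).trace.re ^ q⁻¹ := by
  set N := matRpow σ ((1 - p) / (2 * p))
  set G := matRpow σ (2 * q)⁻¹
  have hexp : -(2 * q)⁻¹ = (1 - p) / (2 * p) := by
    rw [hpq.conjugate_eq]
    have := hpq.sub_one_ne_zero
    field_simp
    ring
  have hGN : G * N * ρ = ρ := by
    refine mul_eq_self_of_suppLE ?_ hsupp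
    simpa only [N, G, ← hexp] using matRpow_mul_matRpow_neg_mul_self hσ (2 * q)⁻¹
  have hρNG : ρ * (N * G) = ρ := by
    have h := congrArg Matrix.conjTranspose hGN
    rwa [Matrix.conjTranspose_mul, Matrix.conjTranspose_mul, hρ.1.eq,
      (matRpow_posSemidef hσ _).1.eq, (matRpow_posSemidef hσ _).1.eq] at h
  have htr : (T * ρ).trace = (N * ρ * N * (G * T * G)).trace := by
    conv_lhs => rw [← hGN, ← hρNG]
    simp only [Matrix.mul_assoc]
    rw [Matrix.trace_mul_comm T]
    simp only [Matrix.mul_assoc]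
    rw [Matrix.trace_mul_comm G]
    simp only [Matrix.mul_assoc]
  have hA : (N * ρ * N).PosSemidef := by
    have h := hρ.mul_mul_conjTranspose_same N
    rwa [(matRpow_posSemidef hσ _).1.eq] at h
  have hB : (G * T * G).PosSemidef := by
    have h := hT.mul_mul_conjTranspose_same G
    rwa [(matRpow_posSemidef hσ _).1.eq] at h
  calc (T * ρ).trace.re = (N * ρ * N * (G * T * G)).trace.re := by rw [htr]
    _ ≤ sandwichedQ p ρ σ ^ p⁻¹ * (matRpow (G * T * G) q).trace.re ^ q⁻¹ :=
      trace_mul_re_le_holder hA hB hpq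
    _ ≤ sandwichedQ p ρ σ ^ p⁻¹ * (T * σ).trace.re ^ q⁻¹ := by
      refine mul_le_mul_of_nonneg_left ?_ (Real.rpow_nonneg (sandwichedQ_nonneg hρ hσ) _)
      exact Real.rpow_le_rpow (trace_re_nonneg (matRpow_posSemidef hB q))
        (trace_rpow_conj_le_trace_mul hσ hT hT1 hpq.symm.lt.le) (inv_nonneg.2 hpq.symm.nonneg)

end Key

section Channels

variable [Fintype d] [DecidableEq d]

lemma exp_neg_mul_trace_rpow_le {ρ σ T : Matrix d d ℂ} (hρ : ρ.PosSemidef) (hσ : σ.PosSemidef)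
    (hT : T.PosSemidef) (hT1 : (1 - T).PosSemidef) (hsupp : suppLE ρ σ) {α R : ℝ} (hα : 1 < α)
    (hR : (α - 1)⁻¹ * Real.log (sandwichedQ α ρ σ) ≤ R) :
    Real.exp (-R) * (T * ρ).trace.re ^ (α / (α - 1)) ≤ (T * σ).trace.re := by
  have hpq : α.HolderConjugate (α / (α - 1)) := (Real.holderConjugate_iff_eq_conjExponent hα).2 rfl
  set q := α / (α - 1)
  set Q := sandwichedQ α ρ σ
  have ha := trace_mul_re_nonneg hT hρ
  have ht := trace_mul_re_nonneg hT hσ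
  have hkey := trace_mul_re_le_sandwichedQ hρ hσ hT hT1 hsupp hpq
  rcases (sandwichedQ_nonneg (α := α) hρ hσ).eq_or_lt with hQ | hQ
  · have ha0 : (T * ρ).trace.re = 0 := by
      refine le_antisymm ?_ ha
      rwa [← hQ, Real.zero_rpow (inv_ne_zero hpq.ne_zero), zero_mul] at hkey
    rwa [ha0, Real.zero_rpow hpq.symm.ne_zero, mul_zero]
  · have hQR : Q ^ (α⁻¹ * q) ≤ Real.exp R := by
      have hexp : α⁻¹ * q = (α - 1)⁻¹ := by
        have := hpq.sub_one_ne_zero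
        simp only [q]
        field_simp
      rw [hexp, Real.rpow_def_of_pos hQ, mul_comm]
      exact Real.exp_le_exp.2 hR
    have hpow : (T * ρ).trace.re ^ q ≤ Q ^ (α⁻¹ * q) * (T * σ).trace.re := by
      calc (T * ρ).trace.re ^ q ≤ (Q ^ α⁻¹ * (T * σ).trace.re ^ q⁻¹) ^ q :=
            Real.rpow_le_rpow ha hkey hpq.symm.nonneg
        _ = Q ^ (α⁻¹ * q) * (T * σ).trace.re := by
            rw [Real.mul_rpow (Real.rpow_nonneg hQ.le _) (Real.rpow_nonneg ht _),
              ← Real.rpow_mul hQ.le, ← Real.rpow_mul ht, inv_mul_cancel₀ hpq.symm.ne_zero,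
              Real.rpow_one]
    calc Real.exp (-R) * (T * ρ).trace.re ^ q
        ≤ Real.exp (-R) * (Real.exp R * (T * σ).trace.re) :=
          mul_le_mul_of_nonneg_left (hpow.trans (mul_le_mul_of_nonneg_right hQR ht))
            (Real.exp_pos _).le
      _ = (T * σ).trace.re := by
          rw [← mul_assoc, ← Real.exp_add, neg_add_cancel, Real.exp_zero, one_mul]

end Channels

section Tests

variable [Fintype X] [Fintype d] [DecidableEq d]

lemma typeIErrVal_eq {Φ : X → Matrix d d ℂ} (hΦ : IsCQChannel Φ) {p : X → ℝ} (hp : IsProbDist p)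
    (T : X → Matrix d d ℂ) : typeIErrVal Φ p T = 1 - ∑ x, p x * (T x * Φ x).trace.re := by
  simp only [typeIErrVal, Matrix.sub_mul, Matrix.one_mul, Matrix.trace_sub, (hΦ _).2,
    Complex.sub_re, Complex.one_re, mul_sub, mul_one, Finset.sum_sub_distrib, hp.2]

lemma exp_neg_mul_rpow_le_sum_trace {Φ Φf : X → Matrix d d ℂ} (hΦ : IsCQChannel Φ)
    (hΦf : ∀ x, (Φf x).PosSemidef) (hsupp : ∀ x, suppLE (Φ x) (Φf x)) {α ε R : ℝ} (hα : 1 < α)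
    (hε : ε < 1) (hR : ∀ x, (α - 1)⁻¹ * Real.log (sandwichedQ α (Φ x) (Φf x)) ≤ R)
    {p : X → ℝ} {T : X → Matrix d d ℂ} (hp : IsProbDist p) (hT : ∀ x, IsPOVMElem (T x))
    (herr : typeIErrVal Φ p T ≤ ε) :
    Real.exp (-R) * (1 - ε) ^ (α / (α - 1)) ≤ ∑ x, p x * (T x * Φf x).trace.re := by
  have hq : 1 ≤ α / (α - 1) := ((Real.holderConjugate_iff_eq_conjExponent hα).2 rfl).symm.lt.le
  have ha : ∀ x, 0 ≤ (T x * Φ x).trace.re := fun x => trace_mul_re_nonneg (hT x).1 (hΦ x).1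
  have hsum : 1 - ε ≤ ∑ x, p x * (T x * Φ x).trace.re := by
    rw [typeIErrVal_eq hΦ hp] at herr
    linarith
  calc Real.exp (-R) * (1 - ε) ^ (α / (α - 1))
      ≤ Real.exp (-R) * ∑ x, p x * (T x * Φ x).trace.re ^ (α / (α - 1)) := by
        refine mul_le_mul_of_nonneg_left ?_ (Real.exp_pos _).le
        refine (Real.rpow_le_rpow (by linarith) hsum (by linarith)).trans ?_
        exact rpow_sum_mul_le_sum_mul_rpow hp.1 hp.2.le ha hq
    _ = ∑ x, p x * (Real.exp (-R) * (T x * Φ x).trace.re ^ (α / (α - 1))) := by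
        rw [Finset.mul_sum]
        exact Finset.sum_congr rfl fun x _ => by ring
    _ ≤ ∑ x, p x * (T x * Φf x).trace.re :=
        Finset.sum_le_sum fun x _ => mul_le_mul_of_nonneg_left
          (exp_neg_mul_trace_rpow_le (hΦ x).1 (hΦf x) (hT x).1 (hT x).2 (hsupp x) hα (hR x))
          (hp.1 x)

lemma le_typeIIErrSet [Nonempty X] {Φ : X → Matrix d d ℂ} {S : Set (X → Matrix d d ℂ)}
    (hS : ∀ Φf ∈ S, IsCQChannel Φf) {ε θ : ℝ} (hε : 0 ≤ ε)
    (h : ∀ p T, IsProbDist p → (∀ x, IsPOVMElem (T x)) → typeIErrVal Φ p T ≤ ε →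
      ∃ Φf ∈ S, θ ≤ ∑ x, p x * (T x * Φf x).trace.re) :
    θ ≤ typeIIErrSet ε Φ S := by
  have hcard : (0 : ℝ) < Fintype.card X := Nat.cast_pos.2 Fintype.card_pos
  have hunif : IsProbDist fun _ : X => ((Fintype.card X : ℝ))⁻¹ :=
    ⟨fun _ => by positivity, by simp [Finset.card_univ, hcard.ne']⟩
  have hone : ∀ _ : X, IsPOVMElem (1 : Matrix d d ℂ) :=
    fun _ => ⟨Matrix.PosSemidef.one, by simpa using Matrix.PosSemidef.zero⟩
  refine le_csInf ⟨_, _, _, hunif, hone, ?_, rfl⟩ ?_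
  · simpa [typeIErrVal] using hε
  rintro _ ⟨p, T, hp, hT, herr, rfl⟩
  obtain ⟨Φf, hΦf, hθ⟩ := h p T hp hT herr
  refine hθ.trans (le_csSup ⟨1, ?_⟩ ⟨Φf, hΦf, rfl⟩)
  rintro _ ⟨Φg, hΦg, rfl⟩
  calc ∑ x, p x * (T x * Φg x).trace.re ≤ ∑ x, p x * 1 :=
        Finset.sum_le_sum fun x _ => mul_le_mul_of_nonneg_left
          (trace_mul_re_le_one (hT x).2 (hS Φg hΦg x).1 (hS Φg hΦg x).2) (hp.1 x)
    _ = 1 := by simpa using hp.2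

end Tests

section Divergence

variable [Fintype X] [Fintype d] [DecidableEq d]

lemma chRenyiDiv_eq_top_of_not_suppLE {α : ℝ} {Φ Φf : X → Matrix d d ℂ} {x : X}
    (hx : ¬ suppLE (Φ x) (Φf x)) : chRenyiDiv α Φ Φf = ⊤ :=
  top_le_iff.1 <| (if_neg hx).symm.le.trans (le_iSup (fun x => sandRenyi α (Φ x) (Φf x)) x)

lemma neg_log_typeIIErrSet_sub_le_chRenyiDiv [Nonempty X] {α ε : ℝ} (hα : 1 < α) (hε0 : 0 ≤ ε)
    (hε1 : ε < 1) {S : Set (X → Matrix d d ℂ)} (hS : ∀ Φf ∈ S, IsCQChannel Φf)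
    {Φ : X → Matrix d d ℂ} (hΦ : IsCQChannel Φ) {Φf : X → Matrix d d ℂ} (hΦf : Φf ∈ S) :
    ((-Real.log (typeIIErrSet ε Φ S) - α / (α - 1) * Real.log (1 / (1 - ε)) : ℝ) : EReal) ≤
      chRenyiDiv α Φ Φf := by
  by_cases hsupp : ∀ x, suppLE (Φ x) (Φf x)
  swap
  · obtain ⟨x, hx⟩ := not_forall.1 hsupp
    rw [chRenyiDiv_eq_top_of_not_suppLE hx]
    exact le_top
  set r : X → ℝ := fun x => (α - 1)⁻¹ * Real.log (sandwichedQ α (Φ x) (Φf x))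
  obtain ⟨x₀, hx₀⟩ := Finite.exists_max r
  have hdiv : ((r x₀ : ℝ) : EReal) ≤ chRenyiDiv α Φ Φf :=
    (sandRenyi_of_suppLE (hsupp x₀)).symm.le.trans
      (le_iSup (fun x => sandRenyi α (Φ x) (Φf x)) x₀)
  refine le_trans (EReal.coe_le_coe_iff.2 ?_) hdiv
  have hθ : 0 < Real.exp (-r x₀) * (1 - ε) ^ (α / (α - 1)) :=
    mul_pos (Real.exp_pos _) (Real.rpow_pos_of_pos (by linarith) _)
  have hβ := le_typeIIErrSet hS hε0 fun p T hp hT herr => ⟨Φf, hΦf,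
    exp_neg_mul_rpow_le_sum_trace hΦ (fun x => (hS Φf hΦf x).1) hsupp hα hε1 hx₀ hp hT herr⟩
  have hlog := Real.log_le_log hθ hβ
  rw [Real.log_mul (Real.exp_pos _).ne' (Real.rpow_pos_of_pos (by linarith) _).ne', Real.log_exp,
    Real.log_rpow (by linarith)] at hlog
  rw [one_div, Real.log_inv]
  linarith

end Divergence

theorem bound_on_typeII_errors_against_free_set_general
    {X d : Type*} [Fintype X] [Nonempty X] [Fintype d] [DecidableEq d]
    (α ε : ℝ) (hα : 1 < α) (hε0 : 0 ≤ ε) (hε1 : ε < 1)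
    (S : Set (X → Matrix d d ℂ)) (hS : ∀ Φf ∈ S, IsCQChannel Φf)
    (Φ : X → Matrix d d ℂ) (hΦ : IsCQChannel Φ) :
    ((-Real.log (typeIIErrSet ε Φ S) : ℝ) : EReal) ≤
      chRenyiDivSet α Φ S + (((α / (α - 1)) * Real.log (1 / (1 - ε)) : ℝ) : EReal) := by
  have h := le_iInf₂ fun Φf (hΦf : Φf ∈ S) =>
    neg_log_typeIIErrSet_sub_le_chRenyiDiv hα hε0 hε1 hS hΦ hΦf
  calc ((-Real.log (typeIIErrSet ε Φ S) : ℝ) : EReal)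
      = ((-Real.log (typeIIErrSet ε Φ S) - α / (α - 1) * Real.log (1 / (1 - ε)) : ℝ) : EReal) +
          ((α / (α - 1) * Real.log (1 / (1 - ε)) : ℝ) : EReal) := by
        rw [← EReal.coe_add, sub_add_cancel]
    _ ≤ chRenyiDivSet α Φ S + ((α / (α - 1) * Real.log (1 / (1 - ε)) : ℝ) : EReal) :=
        add_le_add_left h _

/-- **Bound on type II errors between a CQ channel and a set of free CQ channels**
(Lemma 3.5): for `α > 1`, `ε ∈ [0,1)`, a set `𝓕` of free CQ channels satisfying Axioms CQ1,
CQ2, CQ4, and a CQ channel `Φ`,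
`−log β_ε(Φ‖𝓕) ≤ D̃_α(Φ‖𝓕) + (α/(α−1)) log(1/(1−ε))`. -/
theorem bound_on_typeII_errors_against_free_set
    {X d : Type*} [Fintype X] [Nonempty X] [Fintype d] [DecidableEq d]
    (α ε : ℝ) (hα : 1 < α) (hε0 : 0 ≤ ε) (hε1 : ε < 1)
    (S : Set (X → Matrix d d ℂ)) (hS : ∀ Φf ∈ S, IsCQChannel Φf)
    (hCQ1 : SetCQ1 S) (hCQ2 : IsCompact S) (hCQ4 : Convex ℝ S)
    (Φ : X → Matrix d d ℂ) (hΦ : IsCQChannel Φ) :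
    ((-Real.log (typeIIErrSet ε Φ S) : ℝ) : EReal) ≤
      chRenyiDivSet α Φ S + (((α / (α - 1)) * Real.log (1 / (1 - ε)) : ℝ) : EReal) :=
  bound_on_typeII_errors_against_free_set_general α ε hα hε0 hε1 S hS Φ hΦ

end CQ
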